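/- For a small category D, an object d of D, and any category M, the inclusion functor from p_i^{-1}(d) into the comma category d ↓ p_i is initial: for every functor X : d ↓ p_i → M, the limit of X exists if and only if the limit of its restriction to p_i^{-1}(d) exists, and in that case they agree. -/

import Mathlib

open CategoryTheory Limits
universe u

namespace SCat

variable (D : Type u) [SmallCategory D]

lemma monotone_functor_comp {P Q R : Type*} [Preorder P] [Preorder Q] [Preorder R]
    (f : P →o Q) (g : Q →o R) :
    (g.comp f).monotone.functor = f.monotone.functor ⋙ g.monotone.functor := by
  refine CategoryTheory.Functor.ext (fun _ => rfl) ?_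
  intros
  apply Subsingleton.elim

lemma monotone_functor_id {P : Type*} [Preorder P] :
    (OrderHom.id : P →o P).monotone.functor = 𝟭 P := by
  refine CategoryTheory.Functor.ext (fun _ => rfl) ?_
  intros
  apply Subsingleton.elim

/-- The (opposite) category of simplices `Δᵒᵖ D` of a small category `D`: objects
are paths (functors `[n] ⥤ D`). -/
structure SimplexOfCat where
  n : ℕ
  F : ComposableArrows D n

variable {D}

/-- A morphism `X ⟶ Y` in `Δᵒᵖ D` is a simplicial operator `[Y.n] → [X.n]`
commuting with the functors to `D`. -/
instance : Category (SimplexOfCat D) where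
  Hom X Y := {α : Fin (Y.n + 1) →o Fin (X.n + 1) // Y.F = α.monotone.functor ⋙ X.F}
  id X := ⟨OrderHom.id, by rw [monotone_functor_id]; rfl⟩
  comp {X Y Z} f g := ⟨f.1.comp g.1, by
    rw [monotone_functor_comp, Functor.assoc, ← f.2, ← g.2]⟩
  id_comp f := Subtype.ext (OrderHom.ext _ _ rfl)
  comp_id f := Subtype.ext (OrderHom.ext _ _ rfl)
  assoc f g h := Subtype.ext (OrderHom.ext _ _ rfl)

variable (D)

/-- The initial-vertex functor `p_i : Δᵒᵖ D ⥤ D`, sending a path to its first vertex. -/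
def pInit : SimplexOfCat D ⥤ D where
  obj X := X.F.obj 0
  map {X Y} f :=
    X.F.map (homOfLE (Fin.zero_le _) : (0 : Fin (X.n + 1)) ⟶ f.1 0) ≫
      eqToHom (congrArg (fun G => G.obj (0 : Fin (Y.n + 1))) f.2).symm
  map_id X := by
    have key : ∀ (i : Fin (X.n + 1)) (hi : i = 0) (h : 0 ≤ i) (e : X.F.obj i = X.F.obj 0),
        X.F.map (homOfLE h) ≫ eqToHom e = 𝟙 _ := by
      rintro i rfl h e
      simp
    exact key _ rfl _ _
  map_comp {X Y Z} f g := by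
    have h := Functor.congr_hom f.2
      (homOfLE (Fin.zero_le (g.1 0)) : (0 : Fin (Y.n + 1)) ⟶ g.1 0)
    have key : ∀ (i k : Fin (X.n + 1)) (a : 0 ⟶ k) (b : 0 ⟶ i) (c : i ⟶ k) (W V U : D)
        (e1 : X.F.obj k = W) (e2 : X.F.obj i = V) (e3 : V = X.F.obj i) (e4 : X.F.obj k = U)
        (e5 : U = W),
        X.F.map a ≫ eqToHom e1 =
          (X.F.map b ≫ eqToHom e2) ≫ (eqToHom e3 ≫ X.F.map c ≫ eqToHom e4) ≫ eqToHom e5 := by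
      intro i k a b c W V U e1 e2 e3 e4 e5
      subst e5 e1 e2
      simp only [eqToHom_refl, Category.id_comp, Category.comp_id, ← X.F.map_comp]
      exact congrArg X.F.map (Subsingleton.elim _ _)
    rw [h]
    exact key _ _ _ _ _ _ _ _ _ _ _ _ _

end SCat

namespace SCat

variable (D : Type u) [SmallCategory D]

/-- An object of the fiber `p_i⁻¹(d)`: a path `[n] ⥤ D` whose first vertex is `d`. -/
structure PIFiber (d : D) where
  n : ℕ
  F : ComposableArrows D n
  first_eq : F.obj 0 = d

variable {D}

/-- Morphisms of `p_i⁻¹(d)`: simplicial operators preserving the bottom element and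
commuting with the functors to `D`. -/
instance (d : D) : Category (PIFiber D d) where
  Hom X Y := {α : Fin (Y.n + 1) →o Fin (X.n + 1) //
    α 0 = 0 ∧ Y.F = α.monotone.functor ⋙ X.F}
  id X := ⟨OrderHom.id, rfl, by rw [monotone_functor_id]; rfl⟩
  comp {X Y Z} f g := ⟨f.1.comp g.1, by simp [f.2.1, g.2.1], by
    rw [monotone_functor_comp, Functor.assoc, ← f.2.2, ← g.2.2]⟩
  id_comp f := Subtype.ext (OrderHom.ext _ _ rfl)
  comp_id f := Subtype.ext (OrderHom.ext _ _ rfl)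
  assoc f g h := Subtype.ext (OrderHom.ext _ _ rfl)

/-- The inclusion of the fiber `p_i⁻¹(d)` into the comma category `d ↓ p_i`. -/
def fiberIncl (d : D) : PIFiber D d ⥤ StructuredArrow d (pInit D) where
  obj X := StructuredArrow.mk (Y := SimplexOfCat.mk X.n X.F) (eqToHom X.first_eq.symm)
  map {X Y} f := StructuredArrow.homMk ⟨f.1, f.2.2⟩ (by
    have h0 : f.1 0 = 0 := f.2.1
    dsimp [pInit]
    rw [show (homOfLE _ : (0 : Fin (X.n + 1)) ⟶ f.1 0) = eqToHom (by rw [h0]) from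
      Subsingleton.elim _ _]
    simp [eqToHom_map]
    exact eqToHom_trans _ _)
  map_id X := by
    apply StructuredArrow.hom_ext
    apply Subtype.ext
    rfl
  map_comp f g := by
    apply StructuredArrow.hom_ext
    apply Subtype.ext
    rfl

end SCat

/-! For `c = (d ⟶ p_i x)` in `d ↓ p_i`, prepending the arrow `c.hom` to the path `x` gives a path
starting at `d`, which maps to `c` by the face `d₀`. Any morphism `b ⟶ c` out of the fiber, with
simplicial operator `α`, factors through it via the operator extending `α` by `0 ↦ 0`. So every
comma category `fiberIncl d ↓ c` has a weakly terminal object and is therefore connected. -/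

lemma CategoryTheory.isConnected_of_forall_hom_to {C : Type*} [Category C] (t : C)
    (f : ∀ j : C, j ⟶ t) : IsConnected C :=
  have : Nonempty C := ⟨t⟩
  zigzag_isConnected fun j₁ j₂ => Zigzag.of_hom_inv (f j₁) (f j₂)

def OrderHom.finConsZero {m k : ℕ} (α : Fin (m + 1) →o Fin (k + 1)) :
    Fin (m + 2) →o Fin (k + 1) where
  toFun := Fin.cases 0 α
  monotone' i j hij := by
    induction i using Fin.cases with
    | zero => exact Fin.zero_le _
    | succ i =>
      induction j using Fin.cases with
      | zero => exact absurd (Fin.le_zero_iff.mp hij) (Fin.succ_ne_zero i)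
      | succ j => exact α.monotone (Fin.succ_le_succ_iff.mp hij)

namespace CategoryTheory.ComposableArrows

variable {C : Type*} [Category C]

lemma precomp_comp_eq_finConsZero_comp {m k : ℕ} (G : ComposableArrows C k)
    (α : Fin (m + 1) →o Fin (k + 1)) :
    precomp (n := m) (α.monotone.functor ⋙ G) (G.map (homOfLE (Fin.zero_le (α 0)))) =
      α.finConsZero.monotone.functor ⋙ G := by
  refine ext (fun i => ?_) (fun i hi => ?_)
  · induction i using Fin.cases <;> rfl
  · -- both `eqToHom`s are identities up to definitional unfolding
    cases i <;> exact (Category.comp_id _).symm.trans (Category.id_comp _).symm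

lemma precomp_congr {n : ℕ} {F F' : ComposableArrows C n} {X X' : C} (hF : F = F')
    (hX : X = X') (f : X ⟶ F.left) (f' : X' ⟶ F'.left)
    (hf : f = eqToHom hX ≫ f' ≫ eqToHom (by rw [hF])) : F.precomp f = F'.precomp f' := by
  subst hF hX
  simp only [eqToHom_refl, Category.id_comp, Category.comp_id] at hf
  rw [hf]

end CategoryTheory.ComposableArrows

namespace SCat

variable {D : Type u} [SmallCategory D] {d : D}

def PIFiber.prepend (c : StructuredArrow d (pInit D)) : PIFiber D d :=
  ⟨c.right.n + 1, c.right.F.precomp c.hom, rfl⟩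

def prependProj (c : StructuredArrow d (pInit D)) :
    (fiberIncl d).obj (PIFiber.prepend c) ⟶ c :=
  StructuredArrow.homMk ⟨⟨Fin.succ, Fin.strictMono_succ.monotone⟩,
    (ComposableArrows.precomp_δ₀ c.right.F c.hom).symm⟩
    ((Category.id_comp _).trans (Category.comp_id _))

def liftToPrepend {c : StructuredArrow d (pInit D)} {b : PIFiber D d}
    (f : (fiberIncl d).obj b ⟶ c) : b ⟶ PIFiber.prepend c := by
  refine ⟨f.right.1.finConsZero, rfl, ?_⟩
  have hhom : c.hom = eqToHom b.first_eq.symm ≫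
      (b.F.map (homOfLE (Fin.zero_le (f.right.1 0))) ≫
        eqToHom (congrArg (fun G => G.obj (0 : Fin (c.right.n + 1))) f.right.2).symm) := by
    rw [← StructuredArrow.w f]
    rfl
  exact (ComposableArrows.precomp_congr f.right.2 b.first_eq.symm _ _ hhom).trans
    (ComposableArrows.precomp_comp_eq_finConsZero_comp b.F f.right.1)

lemma fiberIncl_map_liftToPrepend_comp {c : StructuredArrow d (pInit D)} {b : PIFiber D d}
    (f : (fiberIncl d).obj b ⟶ c) : (fiberIncl d).map (liftToPrepend f) ≫ prependProj c = f :=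
  StructuredArrow.hom_ext _ _ (Subtype.ext (OrderHom.ext _ _ rfl))

instance fiberIncl_initial : (fiberIncl d).Initial where
  out c := isConnected_of_forall_hom_to (CostructuredArrow.mk (prependProj c)) fun j =>
    CostructuredArrow.homMk (liftToPrepend j.hom) (fiberIncl_map_liftToPrepend_comp j.hom)

end SCat

open SCat in
/-- The inclusion of the fiber `p_i⁻¹(d)` into the comma category
`d ↓ p_i` is initial: for every functor `X : d ↓ p_i ⥤ M`, the limit of `X` exists
iff the limit of its restriction along the inclusion exists, and in that case they
agree. -/
theorem stmt2 (D : Type u) [SmallCategory D] (d : D) :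
    (fiberIncl (D := D) d).Initial ∧
      ∀ (M : Type (u + 1)) [Category.{u} M] (X : StructuredArrow d (pInit D) ⥤ M),
        (HasLimit X ↔ HasLimit (fiberIncl d ⋙ X)) ∧
        (∀ (h₁ : HasLimit X) (h₂ : HasLimit (fiberIncl d ⋙ X)),
          letI := h₁
          letI := h₂
          Nonempty ((limit (fiberIncl d ⋙ X)) ≅ limit X)) :=
  ⟨fiberIncl_initial, fun _ _ X =>
    ⟨⟨fun _ => inferInstance, fun _ => Functor.Initial.hasLimit_of_comp (fiberIncl d)⟩,
      fun _ _ => ⟨Functor.Initial.limitIso (fiberIncl d) X⟩⟩⟩
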